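/- arXiv:hep-th/0010023 — 2 statements merged into one kernel-verified Lean document; each statement's English description precedes it below -/
import Mathlib

section
/- If ε : G × G → U(1) is defined by ε(g,h) = α(g,h)/α(h,g) for a 2-cocycle α on a finite abelian group G with values in U(1) (trivial action), then ε satisfies the discrete torsion conditions: ε(g₁g₂, g₃) = ε(g₁,g₃)ε(g₂,g₃), ε(g,h) = ε(h,g)⁻¹, and ε(g,g) = 1 for all g, h, g₁, g₂, g₃ ∈ G. -/
/-!
The commutator pairing `α g h / α h g` of a 2-cocycle `α` is multiplicative in its first
argument: combining the cocycle identity at `(g₁, g₂, g₃)`, `(g₁, g₃, g₂)` and `(g₃, g₁, g₂)`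
and using `g₂ g₃ = g₃ g₂`, `g₁ g₃ = g₃ g₁` eliminates every value of `α` at a product except
those in the pairing.
-/

section CocycleCommutator

variable {G : Type*} [CommGroup G]

theorem cocycle_commutator_mul_left {M : Type*} [CommGroup M] {α : G → G → M}
    (hcoc : ∀ x y z, α x y * α (x * y) z = α x (y * z) * α y z) (g₁ g₂ g₃ : G) :
    α (g₁ * g₂) g₃ / α g₃ (g₁ * g₂) = α g₁ g₃ / α g₃ g₁ * (α g₂ g₃ / α g₃ g₂) := by
  have h₁ := hcoc g₁ g₂ g₃
  have h₂ := hcoc g₁ g₃ g₂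
  have h₃ := hcoc g₃ g₁ g₂
  rw [mul_comm g₃ g₂] at h₂
  rw [mul_comm g₃ g₁] at h₃
  rw [eq_div_of_mul_eq'' h₁, eq_div_of_mul_eq' h₃.symm, eq_div_of_mul_eq'' h₂]
  apply Additive.ofMul.injective
  simp only [ofMul_div, ofMul_mul]
  abel

theorem cocycle_commutator_mul_left₀ {M₀ : Type*} [CommGroupWithZero M₀] {α : G → G → M₀}
    (hα : ∀ g h, α g h ≠ 0) (hcoc : ∀ x y z, α x y * α (x * y) z = α x (y * z) * α y z)
    (g₁ g₂ g₃ : G) :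
    α (g₁ * g₂) g₃ / α g₃ (g₁ * g₂) = α g₁ g₃ / α g₃ g₁ * (α g₂ g₃ / α g₃ g₂) := by
  let β : G → G → M₀ˣ := fun g h => Units.mk0 (α g h) (hα g h)
  have hβ : ∀ x y z, β x y * β (x * y) z = β x (y * z) * β y z := fun x y z =>
    Units.ext (hcoc x y z)
  simpa [β] using congrArg Units.val (cocycle_commutator_mul_left hβ g₁ g₂ g₃)

end CocycleCommutator

theorem stmt_8_general {G : Type*} [CommGroup G] (α : G → G → ℂ)
    (habs : ∀ g h, ‖α g h‖ = 1)
    (hcoc : ∀ x y z, α x y * α (x * y) z = α x (y * z) * α y z) :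
    let ε : G → G → ℂ := fun g h => α g h / α h g
    (∀ g₁ g₂ g₃, ε (g₁ * g₂) g₃ = ε g₁ g₃ * ε g₂ g₃) ∧
    (∀ g h, ε g h = (ε h g)⁻¹) ∧ (∀ g, ε g g = 1) := by
  have hα : ∀ g h, α g h ≠ 0 := fun g h => norm_ne_zero_iff.mp (by simp [habs])
  exact ⟨cocycle_commutator_mul_left₀ hα hcoc, fun g h => (inv_div _ _).symm,
    fun g => div_self (hα g g)⟩

theorem stmt_8 {G : Type*} [CommGroup G] [Finite G] (α : G → G → ℂ)
    (habs : ∀ g h, ‖α g h‖ = 1)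
    (hcoc : ∀ x y z, α x y * α (x * y) z = α x (y * z) * α y z)
    (hnorm : ∀ x, α x 1 = 1 ∧ α 1 x = 1) :
    let ε : G → G → ℂ := fun g h => α g h / α h g
    (∀ g₁ g₂ g₃, ε (g₁ * g₂) g₃ = ε g₁ g₃ * ε g₂ g₃) ∧
    (∀ g h, ε g h = (ε h g)⁻¹) ∧ (∀ g, ε g g = 1) :=
  stmt_8_general α habs hcoc
end

section
/- For the action of Z_3 = ⟨z⟩ on U = Z_n × Z_n given by z·(p,q) = (q−p, −p), the first cohomology group H¹(Z_3, U) is trivial when gcd(n,3) = 1 and is isomorphic to Z_3 when 3 divides n. -/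
/-!
A crossed homomorphism `f` on the cyclic group `ZMod m` is determined by `v = f 1`, through
`f x = ∑_{i < x.val} σ^i v`, and conversely every `v` with `∑_{i < m} σ^i v = 0` occurs; `f` is
principal exactly when `v ∈ range (σ - 1)`. Hence `H¹ ≅ U / (σ - 1) U` whenever the norm vanishes.
For `σ (p, q) = (q - p, -p)` the norm `1 + σ + σ²` is zero, and `v` lies in the range of `σ - 1`
iff `v.1 + v.2 ∈ 3 U`, since `(σ - 1)(p, q) = (q - 2p, -p - q)`. So `H¹ ≅ ZMod n / 3 ≅ ZMod (gcd n 3)`,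
and for `3 ∣ n` the classes of `0`, `F` and `-F` with `F 1 = (1, 0)` exhaust it.
-/

open Finset

namespace CyclicCohomology

variable {M : Type*} [AddCommGroup M] {m : ℕ}

def IsCocycle (σ : M → M) (f : ZMod m → M) : Prop :=
  ∀ x y, f (x + y) = σ^[x.val] (f y) + f x

def IsCoboundary (σ : M → M) (f : ZMod m → M) : Prop :=
  ∃ u, ∀ x, f x = σ^[x.val] u - u

theorem sum_range_iterate_add (σ : M →+ M) (v : M) (a b : ℕ) :
    ∑ i ∈ range (a + b), σ^[i] v = ∑ i ∈ range a, σ^[i] v + σ^[a] (∑ i ∈ range b, σ^[i] v) := by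
  simp only [sum_range_add, Function.iterate_add_apply]
  exact congrArg _ (map_sum ((show AddMonoid.End M from σ) ^ a) _ _).symm

theorem sum_range_iterate_sub_self (σ : M →+ M) (u : M) (k : ℕ) :
    ∑ i ∈ range k, σ^[i] (σ u - u) = σ^[k] u - u := by
  simp only [iterate_map_sub, ← Function.iterate_succ_apply]
  exact sum_range_sub (fun i => σ^[i] u) k

namespace IsCocycle

variable {σ : M → M} {f g : ZMod m → M}

theorem apply_zero (hf : IsCocycle σ f) : f 0 = 0 := by
  simpa using hf 0 0

theorem add {σ : M →+ M} (hf : IsCocycle σ f) (hg : IsCocycle σ g) : IsCocycle σ (f + g) := by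
  intro x y
  simp only [Pi.add_apply, hf x y, hg x y, iterate_map_add]
  abel

theorem sub {σ : M →+ M} (hf : IsCocycle σ f) (hg : IsCocycle σ g) : IsCocycle σ (f - g) := by
  intro x y
  simp only [Pi.sub_apply, hf x y, hg x y, iterate_map_sub]
  abel

theorem apply_eq_sum [NeZero m] {σ : M →+ M} (hf : IsCocycle σ f) (x : ZMod m) :
    f x = ∑ i ∈ range x.val, σ^[i] (f 1) := by
  suffices h : ∀ k < m, f k = ∑ i ∈ range k, σ^[i] (f 1) by
    simpa using h x.val x.val_lt
  intro k hk
  induction k with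
  | zero => simpa using hf.apply_zero
  | succ k ih =>
    rw [Nat.cast_succ, hf, ZMod.val_cast_of_lt (by omega), ih (by omega), sum_range_succ, add_comm]

theorem isCoboundary_iff [Fact (1 < m)] {σ : M →+ M} (hf : IsCocycle σ f) :
    IsCoboundary σ f ↔ ∃ u, f 1 = σ u - u := by
  refine ⟨fun ⟨u, hu⟩ => ⟨u, ?_⟩, fun ⟨u, hu⟩ => ⟨u, fun x => ?_⟩⟩
  · simpa [ZMod.val_one] using hu 1
  · rw [hf.apply_eq_sum, hu, sum_range_iterate_sub_self]

end IsCocycle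

def cocycleOf (σ : M → M) (v : M) (x : ZMod m) : M :=
  ∑ i ∈ range x.val, σ^[i] v

theorem isCocycle_cocycleOf [NeZero m] (σ : M →+ M) {v : M}
    (hv : ∑ i ∈ range m, σ^[i] v = 0) : IsCocycle σ (cocycleOf (m := m) σ v) := by
  have periodic : Function.Periodic (fun k => ∑ i ∈ range k, σ^[i] v) m := fun k => by
    simp only [sum_range_iterate_add, hv, iterate_map_zero, add_zero]
  intro x y
  -- periodicity absorbs the reduction in `(x + y).val = (x.val + y.val) % m`
  simp only [cocycleOf, ZMod.val_add, periodic.map_mod_nat, sum_range_iterate_add]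
  exact add_comm _ _

theorem cocycleOf_one [Fact (1 < m)] (σ : M → M) (v : M) :
    cocycleOf (m := m) σ v 1 = v := by
  simp [cocycleOf, ZMod.val_one]

end CyclicCohomology

open CyclicCohomology

section Rotation

variable {A : Type*} [AddCommGroup A]

def rot : A × A →+ A × A where
  toFun u := (u.2 - u.1, -u.1)
  map_zero' := by simp
  map_add' a b := by ext <;> simp <;> abel

@[simp]
theorem rot_apply (u : A × A) : rot u = (u.2 - u.1, -u.1) := rfl

theorem sum_range_three_iterate_rot (u : A × A) : ∑ i ∈ range 3, rot^[i] u = 0 := by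
  ext <;> simp [sum_range_succ] <;> abel

theorem exists_rot_sub_self_eq_iff (v : A × A) :
    (∃ u, v = rot u - u) ↔ ∃ c, v.1 + v.2 = 3 • c := by
  constructor
  · rintro ⟨u, rfl⟩
    exact ⟨-u.1, by simp; abel⟩
  · rintro ⟨c, hc⟩
    refine ⟨(-c, c - v.2), ?_⟩
    ext
    · simp [eq_sub_of_add_eq hc]
      abel
    · simp

theorem CyclicCohomology.IsCocycle.isCoboundary_rot_iff {f : ZMod 3 → A × A}
    (hf : IsCocycle rot f) :
    IsCoboundary rot f ↔ ∃ c, (f 1).1 + (f 1).2 = 3 • c :=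
  hf.isCoboundary_iff.trans (exists_rot_sub_self_eq_iff (f 1))

end Rotation

theorem ZMod.exists_eq_three_mul_add {n : ℕ} (s : ZMod n) :
    ∃ c, s = 3 * c ∨ s = 3 * c + 1 ∨ s = 3 * c - 1 := by
  obtain ⟨m, rfl⟩ := ZMod.intCast_surjective s
  obtain ⟨k, hk | hk | hk⟩ : ∃ k, m = 3 * k ∨ m = 3 * k + 1 ∨ m = 3 * k - 1 :=
    ⟨(m + 1) / 3, by omega⟩
  all_goals exact ⟨k, by subst hk; push_cast; tauto⟩

theorem ZMod.exists_eq_three_mul {n : ℕ} (h : Nat.Coprime 3 n) (s : ZMod n) : ∃ c, s = 3 * c := by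
  obtain ⟨t, ht⟩ := (ZMod.isUnit_iff_coprime 3 n).2 h
  refine ⟨t⁻¹ * s, ?_⟩
  rw [← mul_assoc, show (3 : ZMod n) = t by rw [ht, Nat.cast_ofNat], Units.mul_inv, one_mul]

theorem ZMod.one_ne_three_mul {n : ℕ} (h : 3 ∣ n) (c : ZMod n) : 1 ≠ 3 * c := by
  intro hc
  have := congrArg (ZMod.castHom h (ZMod 3)) hc
  rw [map_one, map_mul, map_ofNat, show (3 : ZMod 3) = 0 from rfl, zero_mul] at this
  exact one_ne_zero this

theorem stmt_17_general (n : ℕ) :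
    let σ : ZMod n × ZMod n → ZMod n × ZMod n := fun u => (u.2 - u.1, -u.1)
    let act : ZMod 3 → ZMod n × ZMod n → ZMod n × ZMod n := fun g => σ^[g.val]
    (Nat.gcd n 3 = 1 → ∀ f : ZMod 3 → ZMod n × ZMod n,
        (∀ x y, f (x + y) = act x (f y) + f x) → ∃ u, ∀ x, f x = act x u - u) ∧
    (3 ∣ n → ∃ f : ZMod 3 → ZMod n × ZMod n,
        (∀ x y, f (x + y) = act x (f y) + f x) ∧
        (¬ ∃ u, ∀ x, f x = act x u - u) ∧
        ∀ g : ZMod 3 → ZMod n × ZMod n, (∀ x y, g (x + y) = act x (g y) + g x) →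
          ((∃ u, ∀ x, g x = act x u - u) ∨
           (∃ u, ∀ x, g x - f x = act x u - u) ∨
           (∃ u, ∀ x, g x + f x = act x u - u))) := by
  intro σ act
  refine ⟨fun hcop f hf => ?_, fun h3 => ?_⟩
  · obtain ⟨c, hc⟩ := ZMod.exists_eq_three_mul (Nat.coprime_comm.1 hcop) ((f 1).1 + (f 1).2)
    exact (IsCocycle.isCoboundary_rot_iff hf).2 ⟨c, by simpa using hc⟩
  have hF : IsCocycle rot (cocycleOf (m := 3) rot ((1, 0) : ZMod n × ZMod n)) :=
    isCocycle_cocycleOf _ (sum_range_three_iterate_rot _)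
  have hF1 : cocycleOf rot ((1, 0) : ZMod n × ZMod n) (1 : ZMod 3) = (1, 0) := cocycleOf_one _ _
  refine ⟨_, hF, fun hcob => ?_, fun g hg => ?_⟩
  · obtain ⟨c, hc⟩ := (IsCocycle.isCoboundary_rot_iff hF).1 hcob
    rw [hF1, nsmul_eq_mul] at hc
    exact ZMod.one_ne_three_mul h3 c (by simpa using hc)
  obtain ⟨c, hc | hc | hc⟩ := ZMod.exists_eq_three_mul_add ((g 1).1 + (g 1).2)
  · exact Or.inl ((IsCocycle.isCoboundary_rot_iff hg).2 ⟨c, by simpa using hc⟩)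
  · refine Or.inr (Or.inl ((IsCocycle.isCoboundary_rot_iff (IsCocycle.sub hg hF)).2 ⟨c, ?_⟩))
    simp only [Pi.sub_apply, hF1, Prod.fst_sub, Prod.snd_sub, sub_zero, nsmul_eq_mul,
      Nat.cast_ofNat]
    linear_combination hc
  · refine Or.inr (Or.inr ((IsCocycle.isCoboundary_rot_iff (IsCocycle.add hg hF)).2 ⟨c, ?_⟩))
    simp only [Pi.add_apply, hF1, Prod.fst_add, Prod.snd_add, add_zero, nsmul_eq_mul,
      Nat.cast_ofNat]
    linear_combination hc

theorem stmt_17 (n : ℕ) (hn : 0 < n) :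
    let σ : ZMod n × ZMod n → ZMod n × ZMod n := fun u => (u.2 - u.1, -u.1)
    let act : ZMod 3 → ZMod n × ZMod n → ZMod n × ZMod n := fun g => σ^[g.val]
    (Nat.gcd n 3 = 1 → ∀ f : ZMod 3 → ZMod n × ZMod n,
        (∀ x y, f (x + y) = act x (f y) + f x) → ∃ u, ∀ x, f x = act x u - u) ∧
    (3 ∣ n → ∃ f : ZMod 3 → ZMod n × ZMod n,
        (∀ x y, f (x + y) = act x (f y) + f x) ∧
        (¬ ∃ u, ∀ x, f x = act x u - u) ∧
        ∀ g : ZMod 3 → ZMod n × ZMod n, (∀ x y, g (x + y) = act x (g y) + g x) →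
          ((∃ u, ∀ x, g x = act x u - u) ∨
           (∃ u, ∀ x, g x - f x = act x u - u) ∨
           (∃ u, ∀ x, g x + f x = act x u - u))) :=
  stmt_17_general n
end
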